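/- arXiv:1603.05576 — 5 statements merged into one kernel-verified Lean document; each statement's English description precedes it below -/
import Mathlib

section
/- Let 0 < ρ < 1 and let ε = ε_Λ(√(ρ(1−ρ)/(1+ρ))) be the flatness factor of Λ at parameter √(ρ(1−ρ)/(1+ρ)). If ε < 1/2, then for all x, y ∈ ℝ the mixture density f_{X̄,Ȳ} is sandwiched by the bivariate Gaussian density: (1 − 2ε)·f_{X,Y}(x,y) ≤ f_{X̄,Ȳ}(x,y) ≤ (1 + 4ε)·f_{X,Y}(x,y). -/
open Real

/-- The centered Gaussian density with standard deviation `σ`. -/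
noncomputable def gpdf (σ x : ℝ) : ℝ :=
  (1 / (Real.sqrt (2 * Real.pi) * σ)) * Real.exp (-(x ^ 2) / (2 * σ ^ 2))

/-- The discrete Gaussian distribution over the lattice `Λ = bℤ` with parameter `σ`,
evaluated at the lattice point `b * k`. -/
noncomputable def dgauss (b σ : ℝ) (k : ℤ) : ℝ :=
  gpdf σ (b * k) / ∑' j : ℤ, gpdf σ (b * j)

/-- The flatness factor of the lattice `Λ = bℤ` at parameter `σ`. -/
noncomputable def flatness (b σ : ℝ) : ℝ :=
  ⨆ x : ℝ, |b * (∑' k : ℤ, gpdf σ (x - b * k)) - 1|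

/-- The bivariate Gaussian density with unit variances and correlation `ρ`. -/
noncomputable def fXY (ρ x y : ℝ) : ℝ :=
  (1 / (2 * Real.pi * Real.sqrt (1 - ρ ^ 2))) *
    Real.exp (-(x ^ 2 + y ^ 2 - 2 * ρ * x * y) / (2 * (1 - ρ ^ 2)))

/-- The density of `(W̄ + √(1-ρ)N₁, W̄ + √(1-ρ)N₂)` where `W̄ ~ D_{Λ,√ρ}`, `Λ = bℤ`. -/
noncomputable def fXbarYbar (ρ b x y : ℝ) : ℝ :=
  ∑' k : ℤ, dgauss b (Real.sqrt ρ) k * gpdf (Real.sqrt (1 - ρ)) (x - b * k) *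
    gpdf (Real.sqrt (1 - ρ)) (y - b * k)

open MeasureTheory ProbabilityTheory

/-!
Completing the square gives
`f_{√ρ}(a) f_{√(1-ρ)}(x-a) f_{√(1-ρ)}(y-a) = f_{X,Y}(x,y) f_σ(a - c)` with `σ² = ρ(1-ρ)/(1+ρ)`
and `c = ρ(x+y)/(1+ρ)`, so `f_{X̄,Ȳ}/f_{X,Y}` is the quotient of the periodized Gaussians
`∑_λ f_σ(c - λ)` and `∑_λ f_{√ρ}(λ)`. Multiplied by `b`, the numerator is within `ε` of `1` by
definition of the flatness factor, and so is the denominator: since `f_{√ρ}` is the convolution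
of `f_σ` with another Gaussian, `b ∑_λ f_{√ρ}(λ)` is an average of values of `b ∑_λ f_σ(· - λ)`.
It remains that `(1-ε)/(1+ε) ≥ 1-2ε` and `(1+ε)/(1-ε) ≤ 1+4ε` for `ε ≤ 1/2`.
-/

section Gaussian

variable {σ : ℝ}

lemma gpdf_eq_gaussianPDFReal (hσ : 0 ≤ σ) : gpdf σ = gaussianPDFReal 0 (σ ^ 2).toNNReal := by
  ext x
  rw [gpdf, gaussianPDFReal, Real.coe_toNNReal _ (sq_nonneg σ), sub_zero,
    Real.sqrt_mul (by positivity) (σ ^ 2), Real.sqrt_sq hσ, one_div]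

lemma gpdf_nonneg (hσ : 0 ≤ σ) (x : ℝ) : 0 ≤ gpdf σ x := by
  rw [gpdf_eq_gaussianPDFReal hσ]
  exact gaussianPDFReal_nonneg _ _ _

lemma gpdf_pos (hσ : 0 < σ) (x : ℝ) : 0 < gpdf σ x := by
  rw [gpdf_eq_gaussianPDFReal hσ.le]
  exact gaussianPDFReal_pos _ _ _ (by simpa using hσ.ne')

lemma gpdf_neg (σ x : ℝ) : gpdf σ (-x) = gpdf σ x := by
  simp [gpdf]

lemma integrable_gpdf (hσ : 0 ≤ σ) : Integrable (gpdf σ) := by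
  rw [gpdf_eq_gaussianPDFReal hσ]
  exact integrable_gaussianPDFReal _ _

lemma integral_gpdf (hσ : 0 < σ) : ∫ x, gpdf σ x = 1 := by
  rw [gpdf_eq_gaussianPDFReal hσ.le]
  exact integral_gaussianPDFReal_eq_one _ (by simpa using hσ.ne')

lemma gpdf_le_gpdf (hσ : 0 ≤ σ) {x y : ℝ} (h : |x| ≤ |y|) : gpdf σ y ≤ gpdf σ x := by
  have hsq : x ^ 2 ≤ y ^ 2 := sq_le_sq.mpr h
  unfold gpdf
  gcongr

variable {s t v : ℝ}

lemma gpdf_mul_gpdf_sub (hs : 0 < s) (ht : 0 < t) (hv : 0 < v) (hvst : v ^ 2 = s ^ 2 + t ^ 2)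
    (a u : ℝ) :
    gpdf s u * gpdf t (a - u) = gpdf v a * gpdf (s * t / v) (u - s ^ 2 * a / v ^ 2) := by
  unfold gpdf
  rw [mul_mul_mul_comm, ← Real.exp_add, mul_mul_mul_comm _ (Real.exp _), ← Real.exp_add]
  congr 1
  · field_simp
  · congr 1
    rw [div_pow, mul_pow]
    field_simp
    rw [hvst]
    ring

lemma integrable_gpdf_mul_gpdf_sub (hs : 0 < s) (ht : 0 < t) (a : ℝ) :
    Integrable fun u => gpdf s u * gpdf t (a - u) := by
  set v := √(s ^ 2 + t ^ 2)
  have hv : 0 < v := by positivity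
  have hvst : v ^ 2 = s ^ 2 + t ^ 2 := Real.sq_sqrt (by positivity)
  simp_rw [gpdf_mul_gpdf_sub hs ht hv hvst a]
  exact ((integrable_gpdf (by positivity)).comp_sub_right _).const_mul _

lemma integral_gpdf_mul_gpdf_sub (hs : 0 < s) (ht : 0 < t) (hv : 0 < v)
    (hvst : v ^ 2 = s ^ 2 + t ^ 2) (a : ℝ) :
    ∫ u, gpdf s u * gpdf t (a - u) = gpdf v a := by
  simp_rw [gpdf_mul_gpdf_sub hs ht hv hvst a]
  rw [integral_const_mul, integral_sub_right_eq_self (gpdf (s * t / v)),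
    integral_gpdf (by positivity), mul_one]

end Gaussian

section LatticeSum

noncomputable def latticeSum (b σ x : ℝ) : ℝ := ∑' k : ℤ, gpdf σ (x - b * k)

variable {b σ : ℝ}

lemma summable_gpdf_sub_mul_int (hσ : 0 < σ) (hb : b ≠ 0) (x : ℝ) :
    Summable fun k : ℤ => gpdf σ (x - b * k) := by
  -- `f_int 0 a t k = exp (-π (k + a) ^ 2 t)`
  have ht : 0 < b ^ 2 / (2 * π * σ ^ 2) := by positivity
  refine ((HurwitzKernelBounds.summable_f_int 0 (-x / b) ht).mul_left
    (1 / (√(2 * π) * σ))).congr fun k => ?_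
  simp only [HurwitzKernelBounds.f_int, pow_zero, one_mul, gpdf]
  congr 2
  field_simp
  ring

lemma latticeSum_nonneg (hσ : 0 ≤ σ) (x : ℝ) : 0 ≤ latticeSum b σ x :=
  tsum_nonneg fun _ => gpdf_nonneg hσ _

lemma latticeSum_sub_mul_int (b σ x : ℝ) (n : ℤ) :
    latticeSum b σ (x - b * n) = latticeSum b σ x := by
  rw [latticeSum, latticeSum, ← (Equiv.addRight n).tsum_eq fun k : ℤ => gpdf σ (x - b * k)]
  congr 1 with k
  rw [Equiv.coe_addRight, Int.cast_add, sub_sub, mul_add, add_comm]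

lemma latticeSum_le_two_mul (hσ : 0 < σ) (hb : 0 < b) (x : ℝ) :
    latticeSum b σ x ≤ 2 * latticeSum b σ 0 := by
  rw [← latticeSum_sub_mul_int b σ x ⌊x / b⌋]
  set y := x - b * ⌊x / b⌋
  have hy0 : 0 ≤ y := by simpa [y, mul_comm] using Int.sub_floor_div_mul_nonneg x hb
  have hyb : y < b := by simpa [y, mul_comm] using Int.sub_floor_div_mul_lt x hb
  have hsum0 := summable_gpdf_sub_mul_int hσ hb.ne' 0
  have hsum1 : Summable fun k : ℤ => gpdf σ (0 - b * ↑(k - 1)) :=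
    (Equiv.subRight (1 : ℤ)).summable_iff.mpr hsum0
  have hshift : ∑' k : ℤ, gpdf σ (0 - b * ↑(k - 1)) = latticeSum b σ 0 :=
    (Equiv.subRight (1 : ℤ)).tsum_eq fun k => gpdf σ (0 - b * k)
  -- for `y ∈ [0, b)` the `k`-th term is dominated by `f_σ(bk) + f_σ(b(k - 1))`
  have hterm (k : ℤ) : gpdf σ (y - b * k) ≤ gpdf σ (0 - b * k) + gpdf σ (0 - b * ↑(k - 1)) := by
    rcases le_or_gt k 0 with hk | hk
    · have hbk : b * k ≤ 0 := mul_nonpos_of_nonneg_of_nonpos hb.le (by exact_mod_cast hk)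
      have hle := gpdf_le_gpdf hσ.le (x := 0 - b * k) (y := y - b * k)
        (by rw [abs_of_nonneg (by linarith), abs_of_nonneg (by linarith)]; linarith)
      linarith [gpdf_nonneg hσ.le (0 - b * ↑(k - 1))]
    · have hk1 : (1 : ℝ) ≤ k := by exact_mod_cast hk
      have hle := gpdf_le_gpdf hσ.le (x := 0 - b * ↑(k - 1)) (y := y - b * k)
        (by
          rw [abs_of_nonpos (by push_cast; nlinarith), abs_of_nonpos (by nlinarith)]
          push_cast
          linarith)
      linarith [gpdf_nonneg hσ.le (0 - b * k)]
  calc latticeSum b σ y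
      ≤ ∑' k : ℤ, (gpdf σ (0 - b * k) + gpdf σ (0 - b * ↑(k - 1))) :=
        (summable_gpdf_sub_mul_int hσ hb.ne' y).tsum_le_tsum hterm (hsum0.add hsum1)
    _ = 2 * latticeSum b σ 0 := by rw [hsum0.tsum_add hsum1, hshift, latticeSum, two_mul]

lemma abs_mul_latticeSum_sub_one_le_flatness (hσ : 0 < σ) (hb : 0 < b) (x : ℝ) :
    |b * latticeSum b σ x - 1| ≤ flatness b σ := by
  refine le_ciSup (f := fun x => |b * latticeSum b σ x - 1|)
    ⟨b * (2 * latticeSum b σ 0) + 1, ?_⟩ x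
  rintro _ ⟨y, rfl⟩
  have hy := latticeSum_le_two_mul hσ hb y
  have hy0 := latticeSum_nonneg (b := b) hσ.le y
  rw [abs_le]
  constructor <;> nlinarith

end LatticeSum

section Flatness

variable {b s t v : ℝ}

lemma latticeSum_eq_integral (hs : 0 < s) (ht : 0 < t) (hv : 0 < v)
    (hvst : v ^ 2 = s ^ 2 + t ^ 2) (hb : b ≠ 0) (x : ℝ) :
    latticeSum b v x = ∫ u, gpdf s u * latticeSum b t (x - u) := by
  have hconv (k : ℤ) : ∫ u, gpdf s u * gpdf t (x - b * k - u) = gpdf v (x - b * k) :=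
    integral_gpdf_mul_gpdf_sub hs ht hv hvst _
  have hnorm (k : ℤ) : ∫ u, ‖gpdf s u * gpdf t (x - b * k - u)‖ = gpdf v (x - b * k) := by
    simp_rw [Real.norm_of_nonneg (mul_nonneg (gpdf_nonneg hs.le _) (gpdf_nonneg ht.le _)), hconv]
  unfold latticeSum
  simp_rw [← hconv, ← tsum_mul_left, sub_right_comm x _ (b * _)]
  refine integral_tsum_of_summable_integral_norm (fun k => integrable_gpdf_mul_gpdf_sub hs ht _) ?_
  simpa only [hnorm] using summable_gpdf_sub_mul_int hv hb x

lemma flatness_antitoneOn (hb : 0 < b) : AntitoneOn (flatness b) (Set.Ioi 0) := by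
  intro t ht v hv htv
  rcases htv.eq_or_lt with rfl | hlt
  · rfl
  set s := √(v ^ 2 - t ^ 2)
  have hs : 0 < s := Real.sqrt_pos.mpr (by nlinarith [Set.mem_Ioi.mp ht])
  have hvst : v ^ 2 = s ^ 2 + t ^ 2 := by rw [Real.sq_sqrt (by nlinarith [Set.mem_Ioi.mp ht])]; ring
  refine ciSup_le fun x => ?_
  set ε := flatness b t
  have hθ (u : ℝ) := abs_le.mp (abs_mul_latticeSum_sub_one_le_flatness ht hb (x - u))
  have hconv := latticeSum_eq_integral hs ht hv hvst hb.ne' x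
  have hpos : 0 < latticeSum b v x :=
    (summable_gpdf_sub_mul_int hv hb.ne' x).tsum_pos (fun _ => gpdf_nonneg hv.le _) 0
      (gpdf_pos hv _)
  have hint : Integrable fun u => b * (gpdf s u * latticeSum b t (x - u)) :=
    (Integrable.of_integral_ne_zero (hconv ▸ hpos.ne')).const_mul b
  have hmean (c : ℝ) : ∫ u, gpdf s u * c = c := by
    rw [integral_mul_const, integral_gpdf hs, one_mul]
  change |b * latticeSum b v x - 1| ≤ ε
  rw [hconv, ← integral_const_mul, abs_le]
  constructor
  · calc -ε = (∫ u, gpdf s u * (1 - ε)) - 1 := by rw [hmean]; ring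
      _ ≤ _ := by
        refine sub_le_sub_right (integral_mono ((integrable_gpdf hs.le).mul_const _) hint
          fun u => ?_) 1
        nlinarith [hθ u, gpdf_nonneg hs.le u]
  · calc _ ≤ (∫ u, gpdf s u * (1 + ε)) - 1 := by
          refine sub_le_sub_right (integral_mono hint ((integrable_gpdf hs.le).mul_const _)
            fun u => ?_) 1
          nlinarith [hθ u, gpdf_nonneg hs.le u]
      _ = ε := by rw [hmean]; ring

end Flatness

section Mixture

variable {ρ : ℝ}

lemma sqrt_one_sub_sq_mul_sqrt (hρ0 : 0 < ρ) (hρ1 : ρ < 1) :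
    √(1 - ρ ^ 2) * √(ρ * (1 - ρ) / (1 + ρ)) = √ρ * (1 - ρ) := by
  have h1p : 0 < 1 + ρ := by linarith
  rw [← Real.sqrt_mul (by nlinarith), show (1 - ρ ^ 2) * (ρ * (1 - ρ) / (1 + ρ)) = ρ * (1 - ρ) ^ 2
    by field_simp; ring, Real.sqrt_mul hρ0.le, Real.sqrt_sq (by linarith)]

lemma gpdf_mul_gpdf_sub_mul_gpdf_sub (hρ0 : 0 < ρ) (hρ1 : ρ < 1) (x y a : ℝ) :
    gpdf √ρ a * gpdf √(1 - ρ) (x - a) * gpdf √(1 - ρ) (y - a) =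
      fXY ρ x y * gpdf √(ρ * (1 - ρ) / (1 + ρ)) (a - ρ * (x + y) / (1 + ρ)) := by
  have h1m : 0 < 1 - ρ := by linarith
  have h1p : 0 < 1 + ρ := by linarith
  have h1sq : 0 < 1 - ρ ^ 2 := by nlinarith
  have hw := sqrt_one_sub_sq_mul_sqrt hρ0 hρ1
  unfold gpdf fXY
  simp only [mul_mul_mul_comm _ (rexp _), ← Real.exp_add]
  rw [Real.sq_sqrt hρ0.le, Real.sq_sqrt h1m.le, Real.sq_sqrt (by positivity)]
  congr 1
  · field_simp
    rw [Real.sq_sqrt (by positivity), Real.sq_sqrt h1m.le]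
    linear_combination 2 * π * hw
  · congr 1
    field_simp
    ring

lemma fXbarYbar_eq (hρ0 : 0 < ρ) (hρ1 : ρ < 1) (b x y : ℝ) :
    fXbarYbar ρ b x y = fXY ρ x y *
      (latticeSum b √(ρ * (1 - ρ) / (1 + ρ)) (ρ * (x + y) / (1 + ρ)) / latticeSum b √ρ 0) := by
  have hS : latticeSum b √ρ 0 = ∑' j : ℤ, gpdf √ρ (b * j) := by
    simp_rw [latticeSum, zero_sub, gpdf_neg]
  have hterm (k : ℤ) : dgauss b √ρ k * gpdf √(1 - ρ) (x - b * k) * gpdf √(1 - ρ) (y - b * k) =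
      fXY ρ x y * gpdf √(ρ * (1 - ρ) / (1 + ρ)) (ρ * (x + y) / (1 + ρ) - b * k) /
        latticeSum b √ρ 0 := by
    rw [dgauss, div_mul_eq_mul_div, div_mul_eq_mul_div, gpdf_mul_gpdf_sub_mul_gpdf_sub hρ0 hρ1,
      ← gpdf_neg, neg_sub, hS]
  rw [fXbarYbar, tsum_congr hterm, tsum_div_const, tsum_mul_left, mul_div_assoc]
  rfl

end Mixture

lemma div_mem_Icc_of_abs_sub_one_le {A B ε : ℝ} (hA : |A - 1| ≤ ε) (hB : |B - 1| ≤ ε)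
    (hε : ε < 1 / 2) : A / B ∈ Set.Icc (1 - 2 * ε) (1 + 4 * ε) := by
  obtain ⟨hA₁, hA₂⟩ := abs_le.mp hA
  obtain ⟨hB₁, hB₂⟩ := abs_le.mp hB
  have hB₀ : 0 < B := by linarith
  rw [Set.mem_Icc, le_div_iff₀ hB₀, div_le_iff₀ hB₀]
  constructor <;> nlinarith

/-- if the flatness factor `ε = ε_Λ(√(ρ(1-ρ)/(1+ρ))) < 1/2`, then the mixture
density is sandwiched: `(1-2ε) f_{X,Y} ≤ f_{X̄,Ȳ} ≤ (1+4ε) f_{X,Y}` pointwise. -/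
theorem mixture_density_sandwich (ρ b : ℝ) (hb : 0 < b) (hρ0 : 0 < ρ) (hρ1 : ρ < 1)
    (hε : flatness b (Real.sqrt (ρ * (1 - ρ) / (1 + ρ))) < 1 / 2) :
    ∀ x y : ℝ,
      (1 - 2 * flatness b (Real.sqrt (ρ * (1 - ρ) / (1 + ρ)))) * fXY ρ x y ≤
          fXbarYbar ρ b x y ∧
        fXbarYbar ρ b x y ≤
          (1 + 4 * flatness b (Real.sqrt (ρ * (1 - ρ) / (1 + ρ)))) * fXY ρ x y := by
  intro x y
  have hσ : 0 < √(ρ * (1 - ρ) / (1 + ρ)) := Real.sqrt_pos.mpr (by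
    have : 0 < 1 - ρ := by linarith
    positivity)
  have hσρ : √(ρ * (1 - ρ) / (1 + ρ)) ≤ √ρ :=
    Real.sqrt_le_sqrt (by rw [div_le_iff₀ (by linarith)]; nlinarith)
  have hA := abs_mul_latticeSum_sub_one_le_flatness hσ hb (ρ * (x + y) / (1 + ρ))
  have hB := (abs_mul_latticeSum_sub_one_le_flatness (Real.sqrt_pos.mpr hρ0) hb 0).trans
    (flatness_antitoneOn hb hσ (Real.sqrt_pos.mpr hρ0) hσρ)
  obtain ⟨hlow, hup⟩ := div_mem_Icc_of_abs_sub_one_le hA hB hε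
  have hF : 0 ≤ fXY ρ x y := by unfold fXY; positivity
  rw [mul_div_mul_left _ _ hb.ne'] at hlow hup
  rw [fXbarYbar_eq hρ0 hρ1, mul_comm (1 - _), mul_comm (1 + _)]
  exact ⟨mul_le_mul_of_nonneg_left hlow hF, mul_le_mul_of_nonneg_left hup hF⟩
end

section
/- (Core of Theorem 2: sufficiency of the average.) Let 0 < ρ < 1. For all x, y ∈ ℝ and every a ∈ Λ, the posterior probability of the discrete Gaussian symbol a given the pair observation (x, y) in the model (X̄, Ȳ) = (W̄ + √(1−ρ)N₁, W̄ + √(1−ρ)N₂) equals its posterior probability given only the average u = (x+y)/2 in the scalar model Ū = W̄ + √((1−ρ)/2)·N: namely, D_{Λ,√ρ}(a)·f_{√(1−ρ)}(x−a)·f_{√(1−ρ)}(y−a) / (∑_{a'∈Λ} D_{Λ,√ρ}(a')·f_{√(1−ρ)}(x−a')·f_{√(1−ρ)}(y−a')) = D_{Λ,√ρ}(a)·f_{√((1−ρ)/2)}(u−a) / (∑_{a'∈Λ} D_{Λ,√ρ}(a')·f_{√((1−ρ)/2)}(u−a')). Consequently, extracting the common message of the Gaussian pair via the reconstruction distribution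 D_{Λ,√ρ} is equivalent to lossy compression of the single Gaussian source (X+Y)/2 (whose variance is (1+ρ)/2) with the same reconstruction distribution. -/
open Real

/-- core of Theorem 2: the posterior probability of the discrete Gaussian
symbol `a = b k` given the pair `(x, y)` in the model `(X̄, Ȳ) = (W̄ + √(1-ρ)N₁, W̄ + √(1-ρ)N₂)`
equals its posterior probability given only the average `u = (x+y)/2` in the scalar model
`Ū = W̄ + √((1-ρ)/2) N`; hence extracting the common message of the Gaussian pair via
`D_{Λ,√ρ}` is equivalent to lossy compression of the single Gaussian source `(X+Y)/2`. -/
theorem posterior_pair_eq_posterior_average (ρ b : ℝ) (hb : 0 < b) (hρ0 : 0 < ρ)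
    (hρ1 : ρ < 1) (x y : ℝ) (k : ℤ) :
    dgauss b (Real.sqrt ρ) k * gpdf (Real.sqrt (1 - ρ)) (x - b * k) *
        gpdf (Real.sqrt (1 - ρ)) (y - b * k) /
        (∑' j : ℤ, dgauss b (Real.sqrt ρ) j * gpdf (Real.sqrt (1 - ρ)) (x - b * j) *
          gpdf (Real.sqrt (1 - ρ)) (y - b * j)) =
      dgauss b (Real.sqrt ρ) k * gpdf (Real.sqrt ((1 - ρ) / 2)) ((x + y) / 2 - b * k) /
        (∑' j : ℤ, dgauss b (Real.sqrt ρ) j *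
          gpdf (Real.sqrt ((1 - ρ) / 2)) ((x + y) / 2 - b * j)) := by
  have h1ρ : (0:ℝ) < 1 - ρ := by linarith
  set S := Real.sqrt (1 - ρ) with hSdef
  set T := Real.sqrt ((1 - ρ) / 2) with hTdef
  have hS : 0 < S := Real.sqrt_pos.mpr h1ρ
  have hT : 0 < T := Real.sqrt_pos.mpr (by linarith)
  have hS2 : S ^ 2 = 1 - ρ := Real.sq_sqrt h1ρ.le
  have hT2 : T ^ 2 = (1 - ρ) / 2 := Real.sq_sqrt (by linarith)
  have hπ : 0 < Real.sqrt (2 * Real.pi) := Real.sqrt_pos.mpr (by positivity)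
  have hπ2 : Real.sqrt (2 * Real.pi) ^ 2 = 2 * Real.pi :=
    Real.sq_sqrt (by positivity)
  set c : ℝ := (1 / (Real.sqrt (2 * Real.pi) * S)) *
      Real.exp (-(x - y) ^ 2 / (4 * (1 - ρ))) * (T / S) with hcdef
  have hc : 0 < c := by positivity
  have hpt : ∀ a : ℝ, gpdf S (x - a) * gpdf S (y - a) = c * gpdf T ((x + y) / 2 - a) := by
    intro a
    have he : -(x - a) ^ 2 / (2 * S ^ 2) + -(y - a) ^ 2 / (2 * S ^ 2)
        = -(x - y) ^ 2 / (4 * (1 - ρ)) + -(((x + y) / 2 - a) ^ 2) / (2 * T ^ 2) := by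
      rw [hS2, hT2]
      field_simp
      ring
    simp only [gpdf, hcdef]
    rw [show (1 / (Real.sqrt (2 * Real.pi) * S) * Real.exp (-(x - a) ^ 2 / (2 * S ^ 2))) *
        (1 / (Real.sqrt (2 * Real.pi) * S) * Real.exp (-(y - a) ^ 2 / (2 * S ^ 2)))
        = (1 / (Real.sqrt (2 * Real.pi) * S) * (1 / (Real.sqrt (2 * Real.pi) * S))) *
          Real.exp (-(x - a) ^ 2 / (2 * S ^ 2) + -(y - a) ^ 2 / (2 * S ^ 2)) by
      rw [Real.exp_add]; ring]
    rw [he, Real.exp_add]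
    field_simp
  have hnum : dgauss b (Real.sqrt ρ) k * gpdf S (x - b * k) * gpdf S (y - b * k)
      = c * (dgauss b (Real.sqrt ρ) k * gpdf T ((x + y) / 2 - b * k)) := by
    rw [mul_assoc, hpt (b * k)]; ring
  have hden : (∑' j : ℤ, dgauss b (Real.sqrt ρ) j * gpdf S (x - b * j) * gpdf S (y - b * j))
      = c * ∑' j : ℤ, dgauss b (Real.sqrt ρ) j * gpdf T ((x + y) / 2 - b * j) := by
    rw [← tsum_mul_left]
    congr 1
    funext j
    rw [mul_assoc, hpt (b * j)]; ring
  rw [hnum, hden, mul_div_mul_left _ _ hc.ne']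
end

section
/- (Core of Theorem 3: sufficiency of the arithmetic mean.) Let L ≥ 1 and 0 < ρ < 1. For every x = (x₁,…,x_L) ∈ ℝ^L and every a ∈ Λ, the posterior probability of the discrete Gaussian symbol a given the L observations in the model X̄_i = W̄ + √(1−ρ)N_i equals its posterior probability given only the arithmetic mean u = (x₁+⋯+x_L)/L in the scalar model Ū = W̄ + √((1−ρ)/L)·N: namely, D_{Λ,√ρ}(a)·∏_{i=1}^L f_{√(1−ρ)}(x_i−a) / (∑_{a'∈Λ} D_{Λ,√ρ}(a')·∏_{i=1}^L f_{√(1−ρ)}(x_i−a')) = D_{Λ,√ρ}(a)·f_{√((1−ρ)/L)}(u−a) / (∑_{a'∈Λ} D_{Λ,√ρ}(a')·f_{√((1−ρ)/L)}(u−a')). Consequently, extracting the common information of the L jointly Gaussian sources with covariance K_L via the reconstruction distribution D_{Λ,√ρ} is equivalent to lossy compression of the single Gaussian source (X₁+⋯+X_L)/L, whose variance is (1+(L−1)ρ)/L. -/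
open Real

/-!
The likelihood of `L` independent observations `xᵢ = a + √(1-ρ) Nᵢ` factors, by completing the
square `∑ (xᵢ - a)² = ∑ (xᵢ - u)² + L (u - a)²`, into a factor independent of `a` times the
likelihood of the mean `u` under noise variance `(1-ρ)/L`. A likelihood rescaled by a nonzero
constant yields the same posterior.
-/

noncomputable def posterior {ι : Type*} (prior likelihood : ι → ℝ) (k : ι) : ℝ :=
  prior k * likelihood k / ∑' j, prior j * likelihood j

theorem posterior_const_mul {ι : Type*} (prior likelihood : ι → ℝ) {c : ℝ} (hc : c ≠ 0)
    (k : ι) : posterior prior (fun j => c * likelihood j) k = posterior prior likelihood k := by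
  have hmul : ∀ j, prior j * (c * likelihood j) = c * (prior j * likelihood j) := fun j => by
    ring
  simp only [posterior, hmul, tsum_mul_left, mul_div_mul_left _ _ hc]

theorem gpdf_sqrt {w : ℝ} (hw : 0 ≤ w) (y : ℝ) :
    gpdf (√w) y = (√(2 * π) * √w)⁻¹ * exp (-(y ^ 2) / (2 * w)) := by
  rw [gpdf, one_div, sq_sqrt hw]

theorem Finset.sum_sub_sq_eq_sum_sub_mean_sq_add {ι : Type*} (s : Finset ι) (hs : s.Nonempty)
    (x : ι → ℝ) (a : ℝ) :
    ∑ i ∈ s, (x i - a) ^ 2 =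
      ∑ i ∈ s, (x i - (∑ i ∈ s, x i) / s.card) ^ 2 + s.card * ((∑ i ∈ s, x i) / s.card - a) ^ 2 := by
  have hn : (s.card : ℝ) ≠ 0 := by exact_mod_cast hs.card_pos.ne'
  set m := (∑ i ∈ s, x i) / s.card
  have hsum : ∑ i ∈ s, x i = s.card * m := (mul_div_cancel₀ _ hn).symm
  have hsplit : ∀ c, ∑ i ∈ s, (x i - c) ^ 2 =
      ∑ i ∈ s, x i ^ 2 - 2 * c * (s.card * m) + s.card * c ^ 2 := by
    intro c
    simp only [sub_sq, Finset.sum_add_distrib, Finset.sum_sub_distrib, ← Finset.sum_mul,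
      ← Finset.mul_sum, hsum, Finset.sum_const, nsmul_eq_mul]
    ring
  rw [hsplit, hsplit]
  ring

theorem prod_gpdf_sub_eq_mul_gpdf_mean_sub {ι : Type*} [Fintype ι] [Nonempty ι] {v : ℝ}
    (hv : 0 < v) (x : ι → ℝ) :
    ∃ c ≠ 0, ∀ a, ∏ i, gpdf (√v) (x i - a) =
      c * gpdf (√(v / Fintype.card ι)) ((∑ i, x i) / Fintype.card ι - a) := by
  set m := (∑ i, x i) / Fintype.card ι with hm
  have hK' : (√(2 * π) * √(v / Fintype.card ι))⁻¹ ≠ 0 := by positivity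
  refine ⟨(√(2 * π) * √v)⁻¹ ^ Fintype.card ι / (√(2 * π) * √(v / Fintype.card ι))⁻¹ *
    exp (-(∑ i, (x i - m) ^ 2) / (2 * v)), by positivity, fun a => ?_⟩
  have hexponent : ∑ i, -((x i - a) ^ 2) / (2 * v) =
      -(∑ i, (x i - m) ^ 2) / (2 * v) + -((m - a) ^ 2) / (2 * (v / Fintype.card ι)) := by
    rw [← Finset.sum_div, Finset.sum_neg_distrib,
      Finset.sum_sub_sq_eq_sum_sub_mean_sq_add _ Finset.univ_nonempty, Finset.card_univ, ← hm]
    clear_value m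
    field_simp
    ring
  simp only [gpdf_sqrt hv.le, gpdf_sqrt (by positivity : 0 ≤ v / Fintype.card ι),
    Finset.prod_mul_distrib, Finset.prod_const, Finset.card_univ, ← exp_sum, hexponent, exp_add]
  generalize (√(2 * π) * √(v / Fintype.card ι))⁻¹ = K' at hK' ⊢
  field_simp

theorem posterior_L_sources_eq_posterior_mean_general (L : ℕ) (hL : 1 ≤ L) (ρ b : ℝ)
    (hρ1 : ρ < 1) (x : Fin L → ℝ) (k : ℤ) :
    dgauss b (Real.sqrt ρ) k * (∏ i, gpdf (Real.sqrt (1 - ρ)) (x i - b * k)) /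
        (∑' j : ℤ, dgauss b (Real.sqrt ρ) j *
          ∏ i, gpdf (Real.sqrt (1 - ρ)) (x i - b * j)) =
      dgauss b (Real.sqrt ρ) k *
          gpdf (Real.sqrt ((1 - ρ) / L)) ((∑ i, x i) / L - b * k) /
        (∑' j : ℤ, dgauss b (Real.sqrt ρ) j *
          gpdf (Real.sqrt ((1 - ρ) / L)) ((∑ i, x i) / L - b * j)) := by
  have : NeZero L := ⟨by omega⟩
  obtain ⟨c, hc, hfactor⟩ := prod_gpdf_sub_eq_mul_gpdf_mean_sub (sub_pos.2 hρ1) x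
  simp only [Fintype.card_fin] at hfactor
  change posterior _ (fun j : ℤ => ∏ i, gpdf √(1 - ρ) (x i - b * j)) k =
    posterior _ (fun j : ℤ => gpdf √((1 - ρ) / L) ((∑ i, x i) / L - b * j)) k
  simp only [hfactor, posterior_const_mul _ _ hc]

/-- core of Theorem 3: the posterior probability of the discrete Gaussian
symbol `a = b k` given the `L` observations in the model `X̄ᵢ = W̄ + √(1-ρ)Nᵢ` equals its
posterior probability given only the arithmetic mean `u = (x₁+⋯+x_L)/L` in the scalar
model `Ū = W̄ + √((1-ρ)/L) N`; hence extracting the common information of the `L` jointly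
Gaussian sources via `D_{Λ,√ρ}` is equivalent to lossy compression of the single Gaussian
source `(X₁+⋯+X_L)/L`. -/
theorem posterior_L_sources_eq_posterior_mean (L : ℕ) (hL : 1 ≤ L) (ρ b : ℝ) (hb : 0 < b)
    (hρ0 : 0 < ρ) (hρ1 : ρ < 1) (x : Fin L → ℝ) (k : ℤ) :
    dgauss b (Real.sqrt ρ) k * (∏ i, gpdf (Real.sqrt (1 - ρ)) (x i - b * k)) /
        (∑' j : ℤ, dgauss b (Real.sqrt ρ) j *
          ∏ i, gpdf (Real.sqrt (1 - ρ)) (x i - b * j)) =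
      dgauss b (Real.sqrt ρ) k *
          gpdf (Real.sqrt ((1 - ρ) / L)) ((∑ i, x i) / L - b * k) /
        (∑' j : ℤ, dgauss b (Real.sqrt ρ) j *
          gpdf (Real.sqrt ((1 - ρ) / L)) ((∑ i, x i) / L - b * j)) :=
  posterior_L_sources_eq_posterior_mean_general L hL ρ b hρ1 x k
end

section
/- (Rate computation for the Pangloss line AG.) Let d₁, d₂ ∈ (0, 1/2]. Let W, E₁, E₂, F₁, F₂ be jointly independent Boolean random variables with W uniform, E₁, E₂ ~ Bernoulli(d₂) and F₁, F₂ ~ Bernoulli(d₁). Define X' = W ⊕ E₁, Y' = W ⊕ E₂, X = X' ⊕ F₁, Y = Y' ⊕ F₂, and set a₁ = d₁(1−d₂) + d₂(1−d₁) and a₀ = 2a₁(1−a₁). Then X − X' − W − Y' − Y is a Markov chain and the mutual information (in nats) satisfies I[(X',Y') : (X,Y)] = I[(X,Y) : W] + I[X : X' | W] + I[Y : Y' | W] = ln 2 − 2h(d₁) + h(a₀), where h(p) = −p ln p − (1−p) ln(1−p). -/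
open MeasureTheory ProbabilityTheory

/-- Shannon entropy (in nats) of a finite-valued random variable `X` under `μ`. -/
noncomputable def measEnt {Ω α : Type*} [MeasurableSpace Ω] [Fintype α]
    (μ : Measure Ω) (X : Ω → α) : ℝ :=
  ∑ a : α, Real.negMulLog ((μ (X ⁻¹' {a})).toReal)

/-- Shannon mutual information `I[X : Y]` (in nats). -/
noncomputable def measMI {Ω α β : Type*} [MeasurableSpace Ω] [Fintype α] [Fintype β]
    (μ : Measure Ω) (X : Ω → α) (Y : Ω → β) : ℝ :=
  measEnt μ X + measEnt μ Y - measEnt μ (fun ω => (X ω, Y ω))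

/-- Conditional Shannon entropy `H[X | Y]` (in nats). -/
noncomputable def measCondEnt {Ω α β : Type*} [MeasurableSpace Ω] [Fintype α] [Fintype β]
    (μ : Measure Ω) (X : Ω → α) (Y : Ω → β) : ℝ :=
  measEnt μ (fun ω => (X ω, Y ω)) - measEnt μ Y

/-- Conditional Shannon mutual information `I[X : Y | Z]` (in nats). -/
noncomputable def measCondMI {Ω α β γ : Type*} [MeasurableSpace Ω] [Fintype α] [Fintype β]
    [Fintype γ] (μ : Measure Ω) (X : Ω → α) (Y : Ω → β) (Z : Ω → γ) : ℝ :=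
  measEnt μ (fun ω => (X ω, Z ω)) + measEnt μ (fun ω => (Y ω, Z ω)) -
    measEnt μ (fun ω => (X ω, Y ω, Z ω)) - measEnt μ Z

/-- The binary entropy function in nats. -/
noncomputable def binEnt (p : ℝ) : ℝ :=
  -(p * Real.log p) - (1 - p) * Real.log (1 - p)

/-!
The tuple `(X, X', W, Y', Y)` is an invertible xor-image of the independent noise
`(W, E₁, E₂, F₁, F₂)`, so its law is `1/2` times the product of the transition probabilities of
the four binary symmetric channels along the path `X − X' − W − Y' − Y`; this product form is the
Markov property. Every entropy entering the mutual informations is then that of an explicit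
marginal: `ln 2` for the uniform bit, plus one binary entropy per channel left in the marginal,
where a `BSC(d₁)` after a `BSC(d₂)` is a `BSC(a₁)` and two `BSC(a₁)` back to back are a `BSC(a₀)`.
Both identities are linear combinations of these closed forms.
-/

open Real

def bernoulliMass (p : ℝ) (b : Bool) : ℝ := if b then p else 1 - p

def crossover (a b : ℝ) : ℝ := a * (1 - b) + b * (1 - a)

theorem bernoulliMass_inv_two (b : Bool) : bernoulliMass 2⁻¹ b = 2⁻¹ := by
  cases b <;> norm_num [bernoulliMass]

theorem crossover_self (a : ℝ) : crossover a a = 2 * a * (1 - a) := by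
  unfold crossover; ring

theorem binEnt_eq_negMulLog_add (p : ℝ) : binEnt p = negMulLog p + negMulLog (1 - p) := by
  simp only [binEnt, negMulLog]; ring

theorem negMulLog_inv_two : negMulLog 2⁻¹ = 2⁻¹ * log 2 := by
  simp [negMulLog, log_inv]

theorem sum_negMulLog_half_mul_bernoulliMass_xor (q : ℝ) :
    ∑ b : Bool × Bool, negMulLog (2⁻¹ * bernoulliMass q (xor b.1 b.2)) = log 2 + binEnt q := by
  simp only [Fintype.sum_prod_type, Fintype.sum_bool, Bool.bne_false, Bool.bne_true,
    Bool.not_false, Bool.not_true, bernoulliMass, Bool.false_eq_true, ↓reduceIte, negMulLog_mul, negMulLog_inv_two, binEnt_eq_negMulLog_add]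
  ring

section

variable {Ω α : Type*} [MeasurableSpace Ω] {μ : Measure Ω}

theorem measureReal_preimage_eq_bernoulliMass [IsProbabilityMeasure μ] {G : Ω → Bool}
    (hG : Measurable G) {p : ℝ} (hp0 : 0 ≤ p) (hp : μ (G ⁻¹' {true}) = ENNReal.ofReal p)
    (b : Bool) :
    μ.real (G ⁻¹' {b}) = bernoulliMass p b := by
  have htrue : μ.real (G ⁻¹' {true}) = p := by rw [measureReal_def, hp, ENNReal.toReal_ofReal hp0]
  cases b
  · rw [bernoulliMass, if_neg Bool.false_ne_true, ← htrue, ← probReal_compl_eq_one_sub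
      (hG (measurableSet_singleton true))]
    congr 1
    ext ω
    simp
  · exact htrue

theorem measureReal_setOf_eq_sum [IsFiniteMeasure μ] [Fintype α] [MeasurableSpace α]
    [MeasurableSingletonClass α] {T : Ω → α} (hT : Measurable T) (Q : α → Prop)
    [DecidablePred Q] :
    μ.real {ω | Q (T ω)} = ∑ a, if Q a then μ.real (T ⁻¹' {a}) else 0 := by
  rw [← Finset.sum_filter, sum_measureReal_preimage_singleton _
    fun a _ => hT (measurableSet_singleton a)]
  congr 1
  ext ω
  simp

theorem ProbabilityTheory.iIndepFun.measureReal_setOf_forall_eq {n : ℕ} {β : Type*}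
    [MeasurableSpace β] [MeasurableSingletonClass β] {f : Fin n → Ω → β} (hf : iIndepFun f μ)
    (v : Fin n → β) :
    μ.real {ω | ∀ i, f i ω = v i} = ∏ i, μ.real (f i ⁻¹' {v i}) := by
  have hset : {ω | ∀ i, f i ω = v i} = ⋂ i, f i ⁻¹' {v i} := by ext; simp
  rw [hset, measureReal_def, hf.meas_iInter fun i => ⟨{v i}, measurableSet_singleton _, rfl⟩,
    ENNReal.toReal_prod]
  rfl

end

/-- Law of `(X, X', W, Y', Y)` when `W` is uniform, `X', Y'` are outputs of a binary symmetric
channel with crossover `d₂` on input `W`, and `X, Y` of one with crossover `d₁` on `X', Y'`. -/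
noncomputable def bscChainLaw (d₁ d₂ : ℝ) : Bool × Bool × Bool × Bool × Bool → ℝ
  | (x, x', w, y', y) => 2⁻¹ * bernoulliMass d₁ (xor x x') * bernoulliMass d₂ (xor x' w) *
      bernoulliMass d₂ (xor w y') * bernoulliMass d₁ (xor y' y)

structure HasBSCChainLaw {Ω : Type*} [MeasurableSpace Ω] (μ : Measure Ω) (d₁ d₂ : ℝ)
    (X X' W Y' Y : Ω → Bool) : Prop where
  measurable : Measurable fun ω => (X ω, X' ω, W ω, Y' ω, Y ω)
  measureReal_preimage : ∀ c, μ.real ((fun ω => (X ω, X' ω, W ω, Y' ω, Y ω)) ⁻¹' {c}) =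
    bscChainLaw d₁ d₂ c

namespace HasBSCChainLaw

variable {Ω β : Type*} [MeasurableSpace Ω] {μ : Measure Ω} {d₁ d₂ : ℝ} {X X' W Y' Y : Ω → Bool}

theorem symm (h : HasBSCChainLaw μ d₁ d₂ X X' W Y' Y) : HasBSCChainLaw μ d₁ d₂ Y Y' W X' X where
  measurable := (measurable_of_finite fun c : Bool × Bool × Bool × Bool × Bool =>
    (c.2.2.2.2, c.2.2.2.1, c.2.2.1, c.2.1, c.1)).comp h.measurable
  measureReal_preimage := by
    rintro ⟨y, y', w, x', x⟩
    have hset : (fun ω => (Y ω, Y' ω, W ω, X' ω, X ω)) ⁻¹' {(y, y', w, x', x)} =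
        (fun ω => (X ω, X' ω, W ω, Y' ω, Y ω)) ⁻¹' {(x, x', w, y', y)} := by
      ext ω
      simp only [Set.mem_preimage, Set.mem_singleton_iff, Prod.mk.injEq]
      tauto
    rw [hset, h.measureReal_preimage]
    simp only [bscChainLaw, Bool.xor_comm]
    ring

section

variable [IsFiniteMeasure μ]

theorem measureReal_setOf (h : HasBSCChainLaw μ d₁ d₂ X X' W Y' Y)
    (Q : Bool × Bool × Bool × Bool × Bool → Prop) [DecidablePred Q] :
    μ.real {ω | Q (X ω, X' ω, W ω, Y' ω, Y ω)} = ∑ c, if Q c then bscChainLaw d₁ d₂ c else 0 := by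
  simp only [measureReal_setOf_eq_sum h.measurable, h.measureReal_preimage]

theorem measEnt_eq [Fintype β] [DecidableEq β]
    (h : HasBSCChainLaw μ d₁ d₂ X X' W Y' Y) (g : Bool × Bool × Bool × Bool × Bool → β)
    (f : β → ℝ) (hf : ∀ b, ∑ c, (if g c = b then bscChainLaw d₁ d₂ c else 0) = f b) :
    measEnt μ (fun ω => g (X ω, X' ω, W ω, Y' ω, Y ω)) = ∑ b, negMulLog (f b) := by
  simp only [measEnt, ← measureReal_def, ← hf, ← h.measureReal_setOf]
  rfl

theorem markov (h : HasBSCChainLaw μ d₁ d₂ X X' W Y' Y) (x x' w y' y : Bool) :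
    μ {ω | X ω = x ∧ X' ω = x' ∧ W ω = w ∧ Y' ω = y' ∧ Y ω = y} *
        (μ {ω | X' ω = x'} * μ {ω | W ω = w} * μ {ω | Y' ω = y'}) =
      μ {ω | X ω = x ∧ X' ω = x'} * μ {ω | X' ω = x' ∧ W ω = w} *
        (μ {ω | W ω = w ∧ Y' ω = y'} * μ {ω | Y' ω = y' ∧ Y ω = y}) := by
  rw [← ENNReal.toReal_eq_toReal_iff' (by finiteness) (by finiteness)]
  simp only [ENNReal.toReal_mul, ← measureReal_def]
  have hjoint : μ.real {ω | X ω = x ∧ X' ω = x' ∧ W ω = w ∧ Y' ω = y' ∧ Y ω = y} =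
      bscChainLaw d₁ d₂ (x, x', w, y', y) := by
    rw [← h.measureReal_preimage]
    congr 1
    ext ω
    simp
  have hX' : μ.real {ω | X' ω = x'} = 2⁻¹ :=
    (h.measureReal_setOf fun c => c.2.1 = x').trans <| by
      cases x' <;> simp [Fintype.sum_prod_type, bscChainLaw, bernoulliMass] <;> ring
  have hW : μ.real {ω | W ω = w} = 2⁻¹ :=
    (h.measureReal_setOf fun c => c.2.2.1 = w).trans <| by
      cases w <;> simp [Fintype.sum_prod_type, bscChainLaw, bernoulliMass] <;> ring
  have hY' : μ.real {ω | Y' ω = y'} = 2⁻¹ :=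
    (h.measureReal_setOf fun c => c.2.2.2.1 = y').trans <| by
      cases y' <;> simp [Fintype.sum_prod_type, bscChainLaw, bernoulliMass] <;> ring
  have hXX' : μ.real {ω | X ω = x ∧ X' ω = x'} = 2⁻¹ * bernoulliMass d₁ (xor x x') :=
    (h.measureReal_setOf fun c => c.1 = x ∧ c.2.1 = x').trans <| by
      cases x <;> cases x' <;> simp [Fintype.sum_prod_type, bscChainLaw, bernoulliMass] <;> ring
  have hX'W : μ.real {ω | X' ω = x' ∧ W ω = w} = 2⁻¹ * bernoulliMass d₂ (xor x' w) :=
    (h.measureReal_setOf fun c => c.2.1 = x' ∧ c.2.2.1 = w).trans <| by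
      cases x' <;> cases w <;> simp [Fintype.sum_prod_type, bscChainLaw, bernoulliMass] <;> ring
  have hWY' : μ.real {ω | W ω = w ∧ Y' ω = y'} = 2⁻¹ * bernoulliMass d₂ (xor w y') :=
    (h.measureReal_setOf fun c => c.2.2.1 = w ∧ c.2.2.2.1 = y').trans <| by
      cases w <;> cases y' <;> simp [Fintype.sum_prod_type, bscChainLaw, bernoulliMass] <;> ring
  have hY'Y : μ.real {ω | Y' ω = y' ∧ Y ω = y} = 2⁻¹ * bernoulliMass d₁ (xor y' y) :=
    (h.measureReal_setOf fun c => c.2.2.2.1 = y' ∧ c.2.2.2.2 = y).trans <| by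
      cases y' <;> cases y <;> simp [Fintype.sum_prod_type, bscChainLaw, bernoulliMass] <;> ring
  rw [hjoint, hX', hW, hY', hXX', hX'W, hWY', hY'Y, bscChainLaw]
  ring

theorem measEnt_W (h : HasBSCChainLaw μ d₁ d₂ X X' W Y' Y) : measEnt μ W = log 2 := by
  refine (h.measEnt_eq (fun c => c.2.2.1) (fun _ => 2⁻¹) ?_).trans ?_
  · rintro (_ | _) <;> simp [Fintype.sum_prod_type, bscChainLaw, bernoulliMass] <;> ring
  · simp [negMulLog_inv_two]

theorem measEnt_X_W (h : HasBSCChainLaw μ d₁ d₂ X X' W Y' Y) :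
    measEnt μ (fun ω => (X ω, W ω)) = log 2 + binEnt (crossover d₁ d₂) := by
  refine (h.measEnt_eq (fun c => (c.1, c.2.2.1))
    (fun b => 2⁻¹ * bernoulliMass (crossover d₁ d₂) (xor b.1 b.2)) ?_).trans
    (sum_negMulLog_half_mul_bernoulliMass_xor _)
  rintro ⟨_ | _, _ | _⟩ <;>
    simp [Fintype.sum_prod_type, bscChainLaw, bernoulliMass, crossover] <;> ring

theorem measEnt_X'_W (h : HasBSCChainLaw μ d₁ d₂ X X' W Y' Y) :
    measEnt μ (fun ω => (X' ω, W ω)) = log 2 + binEnt d₂ := by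
  refine (h.measEnt_eq (fun c => (c.2.1, c.2.2.1))
    (fun b => 2⁻¹ * bernoulliMass d₂ (xor b.1 b.2)) ?_).trans
    (sum_negMulLog_half_mul_bernoulliMass_xor _)
  rintro ⟨_ | _, _ | _⟩ <;> simp [Fintype.sum_prod_type, bscChainLaw, bernoulliMass] <;> ring

theorem measEnt_X_X'_W (h : HasBSCChainLaw μ d₁ d₂ X X' W Y' Y) :
    measEnt μ (fun ω => (X ω, X' ω, W ω)) = log 2 + binEnt d₁ + binEnt d₂ := by
  refine (h.measEnt_eq (fun c => (c.1, c.2.1, c.2.2.1))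
    (fun b => 2⁻¹ * bernoulliMass d₁ (xor b.1 b.2.1) * bernoulliMass d₂ (xor b.2.1 b.2.2))
    ?_).trans ?_
  · rintro ⟨_ | _, _ | _, _ | _⟩ <;>
      simp [Fintype.sum_prod_type, bscChainLaw, bernoulliMass] <;> ring
  · simp [Fintype.sum_prod_type, bernoulliMass, negMulLog_mul, negMulLog_inv_two,
      binEnt_eq_negMulLog_add]
    ring

theorem measEnt_X_Y (h : HasBSCChainLaw μ d₁ d₂ X X' W Y' Y) :
    measEnt μ (fun ω => (X ω, Y ω)) =
      log 2 + binEnt (crossover (crossover d₁ d₂) (crossover d₁ d₂)) := by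
  refine (h.measEnt_eq (fun c => (c.1, c.2.2.2.2))
    (fun b => 2⁻¹ * bernoulliMass (crossover (crossover d₁ d₂) (crossover d₁ d₂))
      (xor b.1 b.2)) ?_).trans (sum_negMulLog_half_mul_bernoulliMass_xor _)
  rintro ⟨_ | _, _ | _⟩ <;>
    simp [Fintype.sum_prod_type, bscChainLaw, bernoulliMass, crossover] <;> ring

theorem measEnt_X_Y_W (h : HasBSCChainLaw μ d₁ d₂ X X' W Y' Y) :
    measEnt μ (fun ω => ((X ω, Y ω), W ω)) = log 2 + 2 * binEnt (crossover d₁ d₂) := by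
  refine (h.measEnt_eq (fun c => ((c.1, c.2.2.2.2), c.2.2.1))
    (fun b => 2⁻¹ * bernoulliMass (crossover d₁ d₂) (xor b.1.1 b.2) *
      bernoulliMass (crossover d₁ d₂) (xor b.2 b.1.2)) ?_).trans ?_
  · rintro ⟨⟨_ | _, _ | _⟩, _ | _⟩ <;>
      simp [Fintype.sum_prod_type, bscChainLaw, bernoulliMass, crossover] <;> ring
  · simp [Fintype.sum_prod_type, bernoulliMass, negMulLog_mul, negMulLog_inv_two,
      binEnt_eq_negMulLog_add]
    ring

theorem measEnt_X'_Y' (h : HasBSCChainLaw μ d₁ d₂ X X' W Y' Y) :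
    measEnt μ (fun ω => (X' ω, Y' ω)) = log 2 + binEnt (crossover d₂ d₂) := by
  refine (h.measEnt_eq (fun c => (c.2.1, c.2.2.2.1))
    (fun b => 2⁻¹ * bernoulliMass (crossover d₂ d₂) (xor b.1 b.2)) ?_).trans
    (sum_negMulLog_half_mul_bernoulliMass_xor _)
  rintro ⟨_ | _, _ | _⟩ <;>
    simp [Fintype.sum_prod_type, bscChainLaw, bernoulliMass, crossover] <;> ring

theorem measEnt_X'_Y'_X_Y (h : HasBSCChainLaw μ d₁ d₂ X X' W Y' Y) :
    measEnt μ (fun ω => ((X' ω, Y' ω), X ω, Y ω)) =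
      log 2 + binEnt (crossover d₂ d₂) + 2 * binEnt d₁ := by
  refine (h.measEnt_eq (fun c => ((c.2.1, c.2.2.2.1), c.1, c.2.2.2.2))
    (fun b => 2⁻¹ * bernoulliMass d₁ (xor b.2.1 b.1.1) *
      bernoulliMass (crossover d₂ d₂) (xor b.1.1 b.1.2) *
      bernoulliMass d₁ (xor b.1.2 b.2.2)) ?_).trans ?_
  · rintro ⟨⟨_ | _, _ | _⟩, _ | _, _ | _⟩ <;>
      simp [Fintype.sum_prod_type, bscChainLaw, bernoulliMass, crossover] <;> ring
  · simp [Fintype.sum_prod_type, bernoulliMass, negMulLog_mul, negMulLog_inv_two,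
      binEnt_eq_negMulLog_add]
    ring

theorem measCondMI_X_X'_W (h : HasBSCChainLaw μ d₁ d₂ X X' W Y' Y) :
    measCondMI μ X X' W = binEnt (crossover d₁ d₂) - binEnt d₁ := by
  rw [measCondMI, h.measEnt_X_W, h.measEnt_X'_W, h.measEnt_X_X'_W, h.measEnt_W]
  ring

theorem measMI_X_Y_W (h : HasBSCChainLaw μ d₁ d₂ X X' W Y' Y) :
    measMI μ (fun ω => (X ω, Y ω)) W =
      log 2 + binEnt (crossover (crossover d₁ d₂) (crossover d₁ d₂)) -
        2 * binEnt (crossover d₁ d₂) := by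
  rw [measMI, h.measEnt_X_Y, h.measEnt_W, h.measEnt_X_Y_W]
  ring

theorem measMI_X'_Y'_X_Y (h : HasBSCChainLaw μ d₁ d₂ X X' W Y' Y) :
    measMI μ (fun ω => (X' ω, Y' ω)) (fun ω => (X ω, Y ω)) =
      log 2 - 2 * binEnt d₁ + binEnt (crossover (crossover d₁ d₂) (crossover d₁ d₂)) := by
  rw [measMI, h.measEnt_X'_Y', h.measEnt_X_Y, h.measEnt_X'_Y'_X_Y]
  ring

end

end HasBSCChainLaw

theorem hasBSCChainLaw_of_iIndepFun {Ω : Type*} [MeasurableSpace Ω] {μ : Measure Ω}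
    [IsProbabilityMeasure μ] {d₁ d₂ : ℝ} (hd₁ : 0 ≤ d₁) (hd₂ : 0 ≤ d₂)
    {W E₁ E₂ F₁ F₂ : Ω → Bool} (hWm : Measurable W) (hE₁m : Measurable E₁)
    (hE₂m : Measurable E₂) (hF₁m : Measurable F₁) (hF₂m : Measurable F₂)
    (hindep : iIndepFun ![W, E₁, E₂, F₁, F₂] μ) (hW : μ (W ⁻¹' {true}) = 1 / 2)
    (hE₁ : μ (E₁ ⁻¹' {true}) = ENNReal.ofReal d₂) (hE₂ : μ (E₂ ⁻¹' {true}) = ENNReal.ofReal d₂)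
    (hF₁ : μ (F₁ ⁻¹' {true}) = ENNReal.ofReal d₁) (hF₂ : μ (F₂ ⁻¹' {true}) = ENNReal.ofReal d₁) :
    HasBSCChainLaw μ d₁ d₂ (fun ω => xor (xor (W ω) (E₁ ω)) (F₁ ω)) (fun ω => xor (W ω) (E₁ ω))
      W (fun ω => xor (W ω) (E₂ ω)) (fun ω => xor (xor (W ω) (E₂ ω)) (F₂ ω)) where
  measurable := (measurable_of_finite fun v : Bool × Bool × Bool × Bool × Bool =>
      (xor (xor v.1 v.2.1) v.2.2.2.1, xor v.1 v.2.1, v.1, xor v.1 v.2.2.1,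
        xor (xor v.1 v.2.2.1) v.2.2.2.2)).comp
    (hWm.prodMk (hE₁m.prodMk (hE₂m.prodMk (hF₁m.prodMk hF₂m))))
  measureReal_preimage := by
    rintro ⟨x, x', w, y', y⟩
    have hset : (fun ω => (xor (xor (W ω) (E₁ ω)) (F₁ ω), xor (W ω) (E₁ ω), W ω,
        xor (W ω) (E₂ ω), xor (xor (W ω) (E₂ ω)) (F₂ ω))) ⁻¹' {(x, x', w, y', y)} =
        {ω | ∀ i, ![W, E₁, E₂, F₁, F₂] i ω = ![w, xor x' w, xor w y', xor x x', xor y' y] i} := by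
      ext ω
      simp only [Set.mem_preimage, Set.mem_singleton_iff, Prod.mk.injEq, Set.mem_ofPred_eq,
        Fin.forall_fin_succ, Matrix.cons_val_zero, Matrix.cons_val_succ, IsEmpty.forall_iff,
        and_true]
      generalize W ω = a, E₁ ω = b, E₂ ω = c, F₁ ω = d, F₂ ω = e
      revert a b c d e x x' w y' y
      decide
    have hW' : μ (W ⁻¹' {true}) = ENNReal.ofReal 2⁻¹ := by
      rw [hW, ENNReal.ofReal_inv_of_pos two_pos]
      norm_num
    rw [hset, hindep.measureReal_setOf_forall_eq, Fin.prod_univ_five]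
    simp only [Matrix.cons_val]
    rw [measureReal_preimage_eq_bernoulliMass hWm (by norm_num) hW',
      measureReal_preimage_eq_bernoulliMass hE₁m hd₂ hE₁,
      measureReal_preimage_eq_bernoulliMass hE₂m hd₂ hE₂,
      measureReal_preimage_eq_bernoulliMass hF₁m hd₁ hF₁,
      measureReal_preimage_eq_bernoulliMass hF₂m hd₁ hF₂, bernoulliMass_inv_two, bscChainLaw]
    ring

theorem pangloss_line_AG_rate_general {Ω : Type*} [MeasurableSpace Ω] (μ : Measure Ω)
    [IsProbabilityMeasure μ] (d₁ d₂ : ℝ) (hd₁0 : 0 < d₁)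
    (hd₂0 : 0 < d₂) (W E₁ E₂ F₁ F₂ : Ω → Bool)
    (hWm : Measurable W) (hE₁m : Measurable E₁) (hE₂m : Measurable E₂)
    (hF₁m : Measurable F₁) (hF₂m : Measurable F₂)
    (hindep : iIndepFun ![W, E₁, E₂, F₁, F₂] μ)
    (hW : μ (W ⁻¹' {true}) = 1 / 2)
    (hE₁ : μ (E₁ ⁻¹' {true}) = ENNReal.ofReal d₂)
    (hE₂ : μ (E₂ ⁻¹' {true}) = ENNReal.ofReal d₂)
    (hF₁ : μ (F₁ ⁻¹' {true}) = ENNReal.ofReal d₁)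
    (hF₂ : μ (F₂ ⁻¹' {true}) = ENNReal.ofReal d₁) :
    let X' : Ω → Bool := fun ω => xor (W ω) (E₁ ω)
    let Y' : Ω → Bool := fun ω => xor (W ω) (E₂ ω)
    let X : Ω → Bool := fun ω => xor (X' ω) (F₁ ω)
    let Y : Ω → Bool := fun ω => xor (Y' ω) (F₂ ω)
    let a₁ : ℝ := d₁ * (1 - d₂) + d₂ * (1 - d₁)
    let a₀ : ℝ := 2 * a₁ * (1 - a₁)
    -- `X − X' − W − Y' − Y` is a Markov chain:
    (∀ x x' w y' y : Bool,
        μ {ω | X ω = x ∧ X' ω = x' ∧ W ω = w ∧ Y' ω = y' ∧ Y ω = y} *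
            (μ {ω | X' ω = x'} * μ {ω | W ω = w} * μ {ω | Y' ω = y'}) =
          μ {ω | X ω = x ∧ X' ω = x'} * μ {ω | X' ω = x' ∧ W ω = w} *
            (μ {ω | W ω = w ∧ Y' ω = y'} * μ {ω | Y' ω = y' ∧ Y ω = y})) ∧
      measMI μ (fun ω => (X' ω, Y' ω)) (fun ω => (X ω, Y ω)) =
        measMI μ (fun ω => (X ω, Y ω)) W + measCondMI μ X X' W + measCondMI μ Y Y' W ∧
      measMI μ (fun ω => (X' ω, Y' ω)) (fun ω => (X ω, Y ω)) =
        Real.log 2 - 2 * binEnt d₁ + binEnt a₀ := by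
  intro X' Y' X Y a₁ a₀
  have h : HasBSCChainLaw μ d₁ d₂ X X' W Y' Y := hasBSCChainLaw_of_iIndepFun hd₁0.le hd₂0.le
    hWm hE₁m hE₂m hF₁m hF₂m hindep hW hE₁ hE₂ hF₁ hF₂
  refine ⟨h.markov, ?_, ?_⟩
  · rw [h.measMI_X'_Y'_X_Y, h.measMI_X_Y_W, h.measCondMI_X_X'_W, h.symm.measCondMI_X_X'_W]
    ring
  · rw [h.measMI_X'_Y'_X_Y, crossover_self]
    rfl

/-- rate computation for the Pangloss line AG: with `W` uniform,
`E₁, E₂ ~ Ber(d₂)`, `F₁, F₂ ~ Ber(d₁)` jointly independent, `X' = W ⊕ E₁`, `Y' = W ⊕ E₂`,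
`X = X' ⊕ F₁`, `Y = Y' ⊕ F₂`, `a₁ = d₁*d₂` and `a₀ = a₁*a₁` (crossover convolutions),
`X − X' − W − Y' − Y` is a Markov chain and
`I[(X',Y') : (X,Y)] = I[(X,Y) : W] + I[X : X' | W] + I[Y : Y' | W] = ln 2 − 2h(d₁) + h(a₀)`. -/
theorem pangloss_line_AG_rate {Ω : Type*} [MeasurableSpace Ω] (μ : Measure Ω)
    [IsProbabilityMeasure μ] (d₁ d₂ : ℝ) (hd₁0 : 0 < d₁) (hd₁ : d₁ ≤ 1 / 2)
    (hd₂0 : 0 < d₂) (hd₂ : d₂ ≤ 1 / 2) (W E₁ E₂ F₁ F₂ : Ω → Bool)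
    (hWm : Measurable W) (hE₁m : Measurable E₁) (hE₂m : Measurable E₂)
    (hF₁m : Measurable F₁) (hF₂m : Measurable F₂)
    (hindep : iIndepFun ![W, E₁, E₂, F₁, F₂] μ)
    (hW : μ (W ⁻¹' {true}) = 1 / 2)
    (hE₁ : μ (E₁ ⁻¹' {true}) = ENNReal.ofReal d₂)
    (hE₂ : μ (E₂ ⁻¹' {true}) = ENNReal.ofReal d₂)
    (hF₁ : μ (F₁ ⁻¹' {true}) = ENNReal.ofReal d₁)
    (hF₂ : μ (F₂ ⁻¹' {true}) = ENNReal.ofReal d₁) :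
    let X' : Ω → Bool := fun ω => xor (W ω) (E₁ ω)
    let Y' : Ω → Bool := fun ω => xor (W ω) (E₂ ω)
    let X : Ω → Bool := fun ω => xor (X' ω) (F₁ ω)
    let Y : Ω → Bool := fun ω => xor (Y' ω) (F₂ ω)
    let a₁ : ℝ := d₁ * (1 - d₂) + d₂ * (1 - d₁)
    let a₀ : ℝ := 2 * a₁ * (1 - a₁)
    -- `X − X' − W − Y' − Y` is a Markov chain:
    (∀ x x' w y' y : Bool,
        μ {ω | X ω = x ∧ X' ω = x' ∧ W ω = w ∧ Y' ω = y' ∧ Y ω = y} *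
            (μ {ω | X' ω = x'} * μ {ω | W ω = w} * μ {ω | Y' ω = y'}) =
          μ {ω | X ω = x ∧ X' ω = x'} * μ {ω | X' ω = x' ∧ W ω = w} *
            (μ {ω | W ω = w ∧ Y' ω = y'} * μ {ω | Y' ω = y' ∧ Y ω = y})) ∧
      measMI μ (fun ω => (X' ω, Y' ω)) (fun ω => (X ω, Y ω)) =
        measMI μ (fun ω => (X ω, Y ω)) W + measCondMI μ X X' W + measCondMI μ Y Y' W ∧
      measMI μ (fun ω => (X' ω, Y' ω)) (fun ω => (X ω, Y ω)) =
        Real.log 2 - 2 * binEnt d₁ + binEnt a₀ :=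
  pangloss_line_AG_rate_general μ d₁ d₂ hd₁0 hd₂0 W E₁ E₂ F₁ F₂ hWm hE₁m hE₂m hF₁m hF₂m hindep hW
    hE₁ hE₂ hF₁ hF₂
end

section
/- (Rate triple for curve GB.) Let a₁ ∈ (0, 1/2) and r ∈ [0, 1/2]. Let W, Z₁, Z₂, G be jointly independent Boolean random variables with W uniform, Z₁, Z₂ ~ Bernoulli(a₁), G ~ Bernoulli(r). Define X = W ⊕ Z₁, Y = W ⊕ Z₂, W' = W ⊕ G, and set a₀ = 2a₁(1−a₁) and β = a₁(1−r) + r(1−a₁). Then (X,Y) − W − W' is a Markov chain and, in nats, I[(X,Y) : W'] = (1 − a₀)·( ln 2 − h( (β − a₀/2)/(1 − a₀) ) ) and H[X | W'] = H[Y | W'] = h(β), where h(p) = −p ln p − (1−p) ln(1−p). -/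
/-!
By independence, `(W, Z₁, Z₂, G)` has the product of the Bernoulli weights as its point masses,
and every quantity in the theorem is a finite sum over these 16 outcomes. `W'` is uniform, and
each of the pairs `(X, Y)`, `(X, W')`, `(Y, W')` puts mass `(1 - p)/2` on each diagonal point
and `p/2` on each off-diagonal point (`p = a₀` resp. `β`), so its entropy is `ln 2 + h(p)`.
The triple `((X, Y), W')` has masses `s₀/2`, `s₁/2` (twice each) and `a₀/4` (four times), where
`s₀ + s₁ = 1 - a₀` and `s₁ = β - a₀/2`; the mutual information then collapses by the grouping
identity `c · h(s₁/c) = -s₀ ln s₀ - s₁ ln s₁ + c ln c` for `c = s₀ + s₁`.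
-/

open MeasureTheory ProbabilityTheory

open Real

def pushWeight {α β : Type*} [Fintype α] [DecidableEq β] (w : α → ℝ) (f : α → β) (b : β) : ℝ :=
  ∑ t, if f t = b then w t else 0

section PointMasses

variable {Ω α β : Type*} [MeasurableSpace Ω] [Fintype α] [MeasurableSpace α]

structure HasPointMasses (μ : Measure Ω) (T : Ω → α) (w : α → ℝ) : Prop where
  measurable : Measurable T
  toReal_measure_preimage_singleton (t : α) : (μ (T ⁻¹' {t})).toReal = w t

variable [MeasurableSingletonClass α] {μ : Measure Ω} [IsFiniteMeasure μ] {T : Ω → α}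
  {w : α → ℝ}

theorem HasPointMasses.toReal_measure_setOf (h : HasPointMasses μ T w) (P : α → Prop)
    [DecidablePred P] : (μ {ω | P (T ω)}).toReal = ∑ t, if P t then w t else 0 := by
  have hset : {ω | P (T ω)} = T ⁻¹' ↑(Finset.univ.filter P) := by ext; simp
  rw [hset, ← Finset.sum_filter, ← measureReal_def,
    ← sum_measureReal_preimage_singleton _ fun t _ => h.measurable (measurableSet_singleton t)]
  exact Finset.sum_congr rfl fun t _ => h.toReal_measure_preimage_singleton t

theorem HasPointMasses.measEnt_comp [Fintype β] [DecidableEq β] (h : HasPointMasses μ T w)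
    (f : α → β) : measEnt μ (fun ω => f (T ω)) = ∑ b, negMulLog (pushWeight w f b) :=
  Finset.sum_congr rfl fun b _ => congrArg negMulLog (h.toReal_measure_setOf (fun t => f t = b))

end PointMasses

def bernoulliWeight (p : ℝ) (b : Bool) : ℝ := if b then p else 1 - p

theorem measure_preimage_toReal_eq_bernoulliWeight {Ω : Type*} [MeasurableSpace Ω]
    {μ : Measure Ω} [IsProbabilityMeasure μ] {f : Ω → Bool} (hf : Measurable f) {p : ℝ}
    (hp : 0 ≤ p) (h : μ (f ⁻¹' {true}) = ENNReal.ofReal p) (b : Bool) :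
    (μ (f ⁻¹' {b})).toReal = bernoulliWeight p b := by
  have htrue : (μ (f ⁻¹' {true})).toReal = p := by rw [h, ENNReal.toReal_ofReal hp]
  cases b
  · have hcompl : f ⁻¹' {false} = (f ⁻¹' {true})ᶜ := by ext; simp
    rw [hcompl, ← measureReal_def, probReal_compl_eq_one_sub (hf (measurableSet_singleton _)),
      measureReal_def, htrue]
    rfl
  · exact htrue

theorem ProbabilityTheory.iIndepFun.measure_preimage_tuple_eq_mul {Ω β : Type*} [MeasurableSpace Ω]
    {μ : Measure Ω} [MeasurableSpace β] [MeasurableSingletonClass β] {A B C D : Ω → β}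
    (h : iIndepFun ![A, B, C, D] μ) (t : β × β × β × β) :
    μ ((fun ω => (A ω, B ω, C ω, D ω)) ⁻¹' {t}) =
      μ (A ⁻¹' {t.1}) * μ (B ⁻¹' {t.2.1}) * μ (C ⁻¹' {t.2.2.1}) * μ (D ⁻¹' {t.2.2.2}) := by
  have hset : (fun ω => (A ω, B ω, C ω, D ω)) ⁻¹' {t} =
      ⋂ i ∈ Finset.univ, ![A, B, C, D] i ⁻¹' ![{t.1}, {t.2.1}, {t.2.2.1}, {t.2.2.2}] i := by
    ext ω
    simp [Fin.forall_fin_succ, Prod.ext_iff]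
  rw [hset, h.measure_inter_preimage_eq_mul _ fun i _ => by
    fin_cases i <;> exact measurableSet_singleton _, Fin.prod_univ_four]
  simp [mul_assoc]

theorem negMulLog_div (x c : ℝ) : negMulLog (x / c) = (negMulLog x + x * log c) / c := by
  rw [div_eq_mul_inv, negMulLog_mul]
  simp only [negMulLog, log_inv]
  ring

theorem mul_binEnt_div {s₀ s₁ c : ℝ} (hs : s₀ + s₁ = c) (hc : c ≠ 0) :
    c * binEnt (s₁ / c) = negMulLog s₀ + negMulLog s₁ - negMulLog c := by
  have h1 : 1 - s₁ / c = s₀ / c := by field_simp; linarith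
  have hnc : negMulLog c = -c * log c := rfl
  rw [binEnt_eq_negMulLog_add, h1, negMulLog_div, negMulLog_div, mul_add, mul_div_cancel₀ _ hc,
    mul_div_cancel₀ _ hc, hnc, ← hs]
  ring

theorem sum_negMulLog_diagonal (p : ℝ) :
    ∑ xy : Bool × Bool, negMulLog (if xy.1 = xy.2 then (1 - p) / 2 else p / 2) =
      log 2 + binEnt p := by
  simp only [Fintype.sum_prod_type, Fintype.sum_bool, reduceIte, Bool.true_eq_false,
    Bool.false_eq_true, negMulLog_div, binEnt_eq_negMulLog_add]
  ring

namespace GB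

/-- An outcome `(w, z₁, z₂, g)` of `(W, Z₁, Z₂, G)`. -/
abbrev Outcome := Bool × Bool × Bool × Bool

noncomputable def weight (a₁ r : ℝ) (t : Outcome) : ℝ :=
  bernoulliWeight (1 / 2) t.1 * bernoulliWeight a₁ t.2.1 * bernoulliWeight a₁ t.2.2.1 *
    bernoulliWeight r t.2.2.2

theorem hasPointMasses_weight {Ω : Type*} [MeasurableSpace Ω] {μ : Measure Ω}
    [IsProbabilityMeasure μ] {a₁ r : ℝ} (ha₁ : 0 ≤ a₁) (hr : 0 ≤ r) {W Z₁ Z₂ G : Ω → Bool}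
    (hWm : Measurable W) (hZ₁m : Measurable Z₁) (hZ₂m : Measurable Z₂) (hGm : Measurable G)
    (hindep : iIndepFun ![W, Z₁, Z₂, G] μ) (hW : μ (W ⁻¹' {true}) = 1 / 2)
    (hZ₁ : μ (Z₁ ⁻¹' {true}) = ENNReal.ofReal a₁) (hZ₂ : μ (Z₂ ⁻¹' {true}) = ENNReal.ofReal a₁)
    (hG : μ (G ⁻¹' {true}) = ENNReal.ofReal r) :
    HasPointMasses μ (fun ω => (W ω, Z₁ ω, Z₂ ω, G ω)) (weight a₁ r) := by
  have hW' : μ (W ⁻¹' {true}) = ENNReal.ofReal (1 / 2) := by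
    rw [hW, ENNReal.ofReal_div_of_pos two_pos]; simp
  refine ⟨by fun_prop, fun t => ?_⟩
  simp only [hindep.measure_preimage_tuple_eq_mul, ENNReal.toReal_mul, weight,
    measure_preimage_toReal_eq_bernoulliWeight hWm (by norm_num) hW',
    measure_preimage_toReal_eq_bernoulliWeight hZ₁m ha₁ hZ₁,
    measure_preimage_toReal_eq_bernoulliWeight hZ₂m ha₁ hZ₂,
    measure_preimage_toReal_eq_bernoulliWeight hGm hr hG]

variable {a₁ r : ℝ}

def W (t : Outcome) : Bool := t.1

def X (t : Outcome) : Bool := xor t.1 t.2.1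

def Y (t : Outcome) : Bool := xor t.1 t.2.2.1

def W' (t : Outcome) : Bool := xor t.1 t.2.2.2

theorem pushWeight_W' (b : Bool) : pushWeight (weight a₁ r) W' b = 1 / 2 := by
  cases b <;>
    simp +decide only [pushWeight, weight, bernoulliWeight, Fintype.sum_prod_type,
      Fintype.sum_bool, reduceIte] <;> ring

theorem pushWeight_XY (xy : Bool × Bool) :
    pushWeight (weight a₁ r) (fun t => (X t, Y t)) xy =
      if xy.1 = xy.2 then (1 - 2 * a₁ * (1 - a₁)) / 2 else 2 * a₁ * (1 - a₁) / 2 := by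
  obtain ⟨x, y⟩ := xy
  cases x <;> cases y <;>
    simp +decide only [pushWeight, weight, bernoulliWeight, Fintype.sum_prod_type,
      Fintype.sum_bool, reduceIte] <;> ring

theorem pushWeight_XW' (xw : Bool × Bool) :
    pushWeight (weight a₁ r) (fun t => (X t, W' t)) xw =
      if xw.1 = xw.2 then (1 - (a₁ * (1 - r) + r * (1 - a₁))) / 2
      else (a₁ * (1 - r) + r * (1 - a₁)) / 2 := by
  obtain ⟨x, w⟩ := xw
  cases x <;> cases w <;>
    simp +decide only [pushWeight, weight, bernoulliWeight, Fintype.sum_prod_type,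
      Fintype.sum_bool, reduceIte] <;> ring

theorem pushWeight_YW' (yw : Bool × Bool) :
    pushWeight (weight a₁ r) (fun t => (Y t, W' t)) yw =
      if yw.1 = yw.2 then (1 - (a₁ * (1 - r) + r * (1 - a₁))) / 2
      else (a₁ * (1 - r) + r * (1 - a₁)) / 2 := by
  obtain ⟨y, w⟩ := yw
  cases y <;> cases w <;>
    simp +decide only [pushWeight, weight, bernoulliWeight, Fintype.sum_prod_type,
      Fintype.sum_bool, reduceIte] <;> ring

theorem pushWeight_XY_W' (xyw : (Bool × Bool) × Bool) :
    pushWeight (weight a₁ r) (fun t => ((X t, Y t), W' t)) xyw =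
      if xyw.1.1 = xyw.1.2 then
        if xyw.1.1 = xyw.2 then ((1 - r) * (1 - a₁) ^ 2 + r * a₁ ^ 2) / 2
        else ((1 - r) * a₁ ^ 2 + r * (1 - a₁) ^ 2) / 2
      else 2 * a₁ * (1 - a₁) / 4 := by
  obtain ⟨⟨x, y⟩, w⟩ := xyw
  cases x <;> cases y <;> cases w <;>
    simp +decide only [pushWeight, weight, bernoulliWeight, Fintype.sum_prod_type,
      Fintype.sum_bool, reduceIte] <;> ring

section

variable {Ω : Type*} [MeasurableSpace Ω] {μ : Measure Ω} [IsFiniteMeasure μ] {T : Ω → Outcome}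

theorem measEnt_W' (h : HasPointMasses μ T (weight a₁ r)) :
    measEnt μ (fun ω => W' (T ω)) = log 2 := by
  rw [h.measEnt_comp, Fintype.sum_bool, pushWeight_W', pushWeight_W',
    one_div, negMulLog, log_inv]
  ring

theorem measEnt_XY (h : HasPointMasses μ T (weight a₁ r)) :
    measEnt μ (fun ω => (X (T ω), Y (T ω))) = log 2 + binEnt (2 * a₁ * (1 - a₁)) := by
  rw [h.measEnt_comp (fun t => (X t, Y t))]
  simp only [pushWeight_XY, sum_negMulLog_diagonal]

theorem measEnt_XW' (h : HasPointMasses μ T (weight a₁ r)) :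
    measEnt μ (fun ω => (X (T ω), W' (T ω))) = log 2 + binEnt (a₁ * (1 - r) + r * (1 - a₁)) := by
  rw [h.measEnt_comp (fun t => (X t, W' t))]
  simp only [pushWeight_XW', sum_negMulLog_diagonal]

theorem measEnt_YW' (h : HasPointMasses μ T (weight a₁ r)) :
    measEnt μ (fun ω => (Y (T ω), W' (T ω))) = log 2 + binEnt (a₁ * (1 - r) + r * (1 - a₁)) := by
  rw [h.measEnt_comp (fun t => (Y t, W' t))]
  simp only [pushWeight_YW', sum_negMulLog_diagonal]

theorem measEnt_XY_W' (h : HasPointMasses μ T (weight a₁ r)) :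
    measEnt μ (fun ω => ((X (T ω), Y (T ω)), W' (T ω))) =
      (1 + 2 * a₁ * (1 - a₁)) * log 2 + negMulLog ((1 - r) * (1 - a₁) ^ 2 + r * a₁ ^ 2) +
        negMulLog ((1 - r) * a₁ ^ 2 + r * (1 - a₁) ^ 2) + negMulLog (2 * a₁ * (1 - a₁)) := by
  rw [h.measEnt_comp (fun t => ((X t, Y t), W' t))]
  simp only [pushWeight_XY_W', Fintype.sum_prod_type, Fintype.sum_bool, reduceIte,
    Bool.true_eq_false, Bool.false_eq_true, negMulLog_div,
    show (4 : ℝ) = 2 ^ 2 by norm_num, log_pow]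
  ring

theorem measMI_XY_W' (h : HasPointMasses μ T (weight a₁ r)) :
    measMI μ (fun ω => (X (T ω), Y (T ω))) (fun ω => W' (T ω)) =
      (1 - 2 * a₁ * (1 - a₁)) * (log 2 - binEnt ((a₁ * (1 - r) + r * (1 - a₁) -
        2 * a₁ * (1 - a₁) / 2) / (1 - 2 * a₁ * (1 - a₁)))) := by
  have hs₁ : a₁ * (1 - r) + r * (1 - a₁) - 2 * a₁ * (1 - a₁) / 2 =
      (1 - r) * a₁ ^ 2 + r * (1 - a₁) ^ 2 := by ring
  have hsum : (1 - r) * (1 - a₁) ^ 2 + r * a₁ ^ 2 + ((1 - r) * a₁ ^ 2 + r * (1 - a₁) ^ 2) =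
      1 - 2 * a₁ * (1 - a₁) := by ring
  have hpos : 1 - 2 * a₁ * (1 - a₁) ≠ 0 := by nlinarith [sq_nonneg (2 * a₁ - 1)]
  rw [measMI, measEnt_XY h, measEnt_W' h, measEnt_XY_W' h, hs₁, mul_sub _ (log 2),
    mul_binEnt_div hsum hpos, binEnt_eq_negMulLog_add]
  ring

theorem measCondEnt_X_W' (h : HasPointMasses μ T (weight a₁ r)) :
    measCondEnt μ (fun ω => X (T ω)) (fun ω => W' (T ω)) =
      binEnt (a₁ * (1 - r) + r * (1 - a₁)) := by
  rw [measCondEnt, measEnt_XW' h, measEnt_W' h]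
  ring

theorem measCondEnt_Y_W' (h : HasPointMasses μ T (weight a₁ r)) :
    measCondEnt μ (fun ω => Y (T ω)) (fun ω => W' (T ω)) =
      binEnt (a₁ * (1 - r) + r * (1 - a₁)) := by
  rw [measCondEnt, measEnt_YW' h, measEnt_W' h]
  ring

theorem markov_XY_W_W' (h : HasPointMasses μ T (weight a₁ r)) (x y w w' : Bool) :
    μ {ω | X (T ω) = x ∧ Y (T ω) = y ∧ W (T ω) = w ∧ W' (T ω) = w'} * μ {ω | W (T ω) = w} =
      μ {ω | X (T ω) = x ∧ Y (T ω) = y ∧ W (T ω) = w} * μ {ω | W (T ω) = w ∧ W' (T ω) = w'} := by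
  rw [← ENNReal.toReal_eq_toReal_iff' (by finiteness) (by finiteness), ENNReal.toReal_mul,
    ENNReal.toReal_mul,
    h.toReal_measure_setOf (fun t => X t = x ∧ Y t = y ∧ W t = w ∧ W' t = w'),
    h.toReal_measure_setOf (fun t => W t = w),
    h.toReal_measure_setOf (fun t => X t = x ∧ Y t = y ∧ W t = w),
    h.toReal_measure_setOf (fun t => W t = w ∧ W' t = w')]
  cases x <;> cases y <;> cases w <;> cases w' <;>
    simp +decide only [weight, bernoulliWeight, Fintype.sum_prod_type, Fintype.sum_bool,
      reduceIte] <;> ring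

end

end GB

theorem curve_GB_rate_triple_general {Ω : Type*} [MeasurableSpace Ω] (μ : Measure Ω)
    [IsProbabilityMeasure μ] (a₁ r : ℝ) (ha₁0 : 0 < a₁)
    (hr0 : 0 ≤ r) (W Z₁ Z₂ G : Ω → Bool)
    (hWm : Measurable W) (hZ₁m : Measurable Z₁) (hZ₂m : Measurable Z₂)
    (hGm : Measurable G)
    (hindep : iIndepFun ![W, Z₁, Z₂, G] μ)
    (hW : μ (W ⁻¹' {true}) = 1 / 2)
    (hZ₁ : μ (Z₁ ⁻¹' {true}) = ENNReal.ofReal a₁)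
    (hZ₂ : μ (Z₂ ⁻¹' {true}) = ENNReal.ofReal a₁)
    (hG : μ (G ⁻¹' {true}) = ENNReal.ofReal r) :
    let X : Ω → Bool := fun ω => xor (W ω) (Z₁ ω)
    let Y : Ω → Bool := fun ω => xor (W ω) (Z₂ ω)
    let W' : Ω → Bool := fun ω => xor (W ω) (G ω)
    let a₀ : ℝ := 2 * a₁ * (1 - a₁)
    let β : ℝ := a₁ * (1 - r) + r * (1 - a₁)
    -- `(X,Y) − W − W'` is a Markov chain:
    (∀ x y w w' : Bool,
        μ {ω | X ω = x ∧ Y ω = y ∧ W ω = w ∧ W' ω = w'} * μ {ω | W ω = w} =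
          μ {ω | X ω = x ∧ Y ω = y ∧ W ω = w} * μ {ω | W ω = w ∧ W' ω = w'}) ∧
      measMI μ (fun ω => (X ω, Y ω)) W' =
        (1 - a₀) * (Real.log 2 - binEnt ((β - a₀ / 2) / (1 - a₀))) ∧
      measCondEnt μ X W' = binEnt β ∧ measCondEnt μ Y W' = binEnt β := by
  have h := GB.hasPointMasses_weight ha₁0.le hr0 hWm hZ₁m hZ₂m hGm hindep hW hZ₁ hZ₂ hG
  -- separate steps, so that `h` fixes `T` before the results are unified with the goal
  have hMI := GB.measMI_XY_W' h
  have hX := GB.measCondEnt_X_W' h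
  have hY := GB.measCondEnt_Y_W' h
  exact ⟨GB.markov_XY_W_W' h, hMI, hX, hY⟩

/-- rate triple for curve GB: with `W` uniform, `Z₁, Z₂ ~ Ber(a₁)`,
`G ~ Ber(r)` jointly independent, `X = W ⊕ Z₁`, `Y = W ⊕ Z₂`, `W' = W ⊕ G`,
`a₀ = 2a₁(1−a₁)` and `β = a₁*r`, the chain `(X,Y) − W − W'` is Markov and, in nats,
`I[(X,Y) : W'] = (1−a₀)(ln 2 − h((β − a₀/2)/(1 − a₀)))` and `H[X|W'] = H[Y|W'] = h(β)`. -/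
theorem curve_GB_rate_triple {Ω : Type*} [MeasurableSpace Ω] (μ : Measure Ω)
    [IsProbabilityMeasure μ] (a₁ r : ℝ) (ha₁0 : 0 < a₁) (ha₁ : a₁ < 1 / 2)
    (hr0 : 0 ≤ r) (hr : r ≤ 1 / 2) (W Z₁ Z₂ G : Ω → Bool)
    (hWm : Measurable W) (hZ₁m : Measurable Z₁) (hZ₂m : Measurable Z₂)
    (hGm : Measurable G)
    (hindep : iIndepFun ![W, Z₁, Z₂, G] μ)
    (hW : μ (W ⁻¹' {true}) = 1 / 2)
    (hZ₁ : μ (Z₁ ⁻¹' {true}) = ENNReal.ofReal a₁)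
    (hZ₂ : μ (Z₂ ⁻¹' {true}) = ENNReal.ofReal a₁)
    (hG : μ (G ⁻¹' {true}) = ENNReal.ofReal r) :
    let X : Ω → Bool := fun ω => xor (W ω) (Z₁ ω)
    let Y : Ω → Bool := fun ω => xor (W ω) (Z₂ ω)
    let W' : Ω → Bool := fun ω => xor (W ω) (G ω)
    let a₀ : ℝ := 2 * a₁ * (1 - a₁)
    let β : ℝ := a₁ * (1 - r) + r * (1 - a₁)
    -- `(X,Y) − W − W'` is a Markov chain:
    (∀ x y w w' : Bool,
        μ {ω | X ω = x ∧ Y ω = y ∧ W ω = w ∧ W' ω = w'} * μ {ω | W ω = w} =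
          μ {ω | X ω = x ∧ Y ω = y ∧ W ω = w} * μ {ω | W ω = w ∧ W' ω = w'}) ∧
      measMI μ (fun ω => (X ω, Y ω)) W' =
        (1 - a₀) * (Real.log 2 - binEnt ((β - a₀ / 2) / (1 - a₀))) ∧
      measCondEnt μ X W' = binEnt β ∧ measCondEnt μ Y W' = binEnt β :=
  curve_GB_rate_triple_general μ a₁ r ha₁0 hr0 W Z₁ Z₂ G hWm hZ₁m hZ₂m hGm hindep hW hZ₁ hZ₂ hG
end
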